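/- Grigorchuk's group G is not virtually solvable: G has no solvable subgroup of finite index. -/

import Mathlib

/-- The Grigorchuk generator `a`: flips the first bit of a nonempty binary word. -/
def grigA : List Bool → List Bool
  | [] => []
  | false :: w => true :: w
  | true :: w => false :: w

mutual
  /-- The Grigorchuk generator `b`. -/
  def grigB : List Bool → List Bool
    | [] => []
    | false :: w => false :: grigA w
    | true :: w => true :: grigC w
  /-- The Grigorchuk generator `c`. -/
  def grigC : List Bool → List Bool
    | [] => []
    | false :: w => false :: grigA w
    | true :: w => true :: grigD w
  /-- The Grigorchuk generator `d`. -/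
  def grigD : List Bool → List Bool
    | [] => []
    | false :: w => false :: w
    | true :: w => true :: grigB w
end

theorem grigA_involutive : Function.Involutive grigA := by
  intro w
  match w with
  | [] => rfl
  | false :: w => rfl
  | true :: w => rfl

theorem grigBCD_involutive : ∀ w : List Bool,
    grigB (grigB w) = w ∧ grigC (grigC w) = w ∧ grigD (grigD w) = w
  | [] => ⟨rfl, rfl, rfl⟩
  | false :: w => by
      simp [grigB, grigC, grigD, grigA_involutive w]
  | true :: w => by
      obtain ⟨hb, hc, hd⟩ := grigBCD_involutive w
      simp [grigB, grigC, grigD, hb, hc, hd]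

theorem grigB_involutive : Function.Involutive grigB :=
  fun w => (grigBCD_involutive w).1

theorem grigC_involutive : Function.Involutive grigC :=
  fun w => (grigBCD_involutive w).2.1

theorem grigD_involutive : Function.Involutive grigD :=
  fun w => (grigBCD_involutive w).2.2

/-- The Grigorchuk generator `a` as a permutation of the set of binary words. -/
def grigPermA : Equiv.Perm (List Bool) := grigA_involutive.toPerm grigA

/-- The Grigorchuk generator `b` as a permutation of the set of binary words. -/
def grigPermB : Equiv.Perm (List Bool) := grigB_involutive.toPerm grigB

/-- The Grigorchuk generator `c` as a permutation of the set of binary words. -/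
def grigPermC : Equiv.Perm (List Bool) := grigC_involutive.toPerm grigC

/-- The Grigorchuk generator `d` as a permutation of the set of binary words. -/
def grigPermD : Equiv.Perm (List Bool) := grigD_involutive.toPerm grigD

/-- Grigorchuk's group: the subgroup of the permutation group of the set of binary
words generated by the four permutations `a, b, c, d`. -/
def grigorchukGroup : Subgroup (Equiv.Perm (List Bool)) :=
  Subgroup.closure {grigPermA, grigPermB, grigPermC, grigPermD}

/-!
`G` is finitely generated, infinite and torsion, and no such group is virtually solvable: a
finite-index subgroup would again be finitely generated and torsion, and a finitely generated
torsion solvable group is finite, since along its derived series every abelianization is a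
finitely generated torsion abelian group, hence finite.

`G` is infinite because it acts transitively on each level of the binary tree: the stabilizer of
the vertex `0` maps onto `G` by taking sections there (`b`, `ada`, `aba`, `aca` have sections
`a`, `b`, `c`, `d`). It is torsion by Grigorchuk's contraction argument, run with the weights
`3, 4, 3, 2` of `a, b, c, d`. After merging adjacent letters and conjugating cyclically, a word
alternates between `a` and `{b, c, d}` and has even length; the sections of such a word weigh
less than the word itself, so their finite order (by induction) gives that of the word, or of
its square when the word swaps the two halves of the tree.
-/

section VirtuallySolvable

variable {G : Type*} [Group G]

theorem map_subtype_derivedSeries_commutator (n : ℕ) :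
    (derivedSeries (commutator G) n).map (commutator G).subtype = derivedSeries G (n + 1) := by
  induction n with
  | zero =>
    rw [derivedSeries_zero, ← MonoidHom.range_eq_map, Subgroup.range_subtype, derivedSeries_one]
  | succ n ih => rw [derivedSeries_succ, Subgroup.map_commutator, ih, ← derivedSeries_succ]

theorem finite_of_derivedSeries_eq_bot [Group.FG G] (hG : IsMulTorsion G) {n : ℕ}
    (hn : derivedSeries G n = ⊥) : Finite G := by
  induction n generalizing G with
  | zero =>
    rw [derivedSeries_zero] at hn
    exact (Subgroup.finite_iff_finite_and_finiteIndex ⊤).mpr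
      ⟨hn ▸ inferInstance, inferInstance⟩
  | succ n ih =>
    have : Group.FG (Abelianization G) := QuotientGroup.fg _
    have : Finite (G ⧸ commutator G) := CommGroup.finite_of_fg_isMulTorsion (Abelianization G)
      (hG.of_surjective (QuotientGroup.mk'_surjective _))
    have hindex : (commutator G).FiniteIndex := Subgroup.finiteIndex_of_finite_quotient
    have : Group.FG (commutator G) := Subgroup.fg_of_index_ne_zero _
    have hn' : derivedSeries (commutator G) n = ⊥ := by
      rw [← Subgroup.map_eq_bot_iff_of_injective _ (Subgroup.subtype_injective _),
        map_subtype_derivedSeries_commutator, hn]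
    exact (Subgroup.finite_iff_finite_and_finiteIndex _).mpr ⟨ih (hG.subgroup _) hn', hindex⟩

theorem Group.IsSolvable.finite_of_fg_of_isMulTorsion [Group.IsSolvable G] [Group.FG G]
    (hG : IsMulTorsion G) : Finite G :=
  let ⟨_, hn⟩ := Group.IsSolvable.solvable (G := G)
  finite_of_derivedSeries_eq_bot hG hn

theorem not_exists_finiteIndex_isSolvable [Group.FG G] [Infinite G] (hG : IsMulTorsion G) :
    ¬ ∃ K : Subgroup G, K.FiniteIndex ∧ Group.IsSolvable K := by
  rintro ⟨K, hK, hKsolv⟩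
  have : Group.FG K := Subgroup.fg_of_index_ne_zero K
  have : Finite K := hKsolv.finite_of_fg_of_isMulTorsion (hG.subgroup K)
  have : Finite G := (Subgroup.finite_iff_finite_and_finiteIndex K).mpr ⟨this, hK⟩
  exact not_finite G

end VirtuallySolvable

theorem Equiv.Perm.isOfFinOrder_of_apply_cons {α : Type*} [Fintype α] {g : Perm (List α)}
    {s : α → Perm (List α)} (hnil : g [] = []) (hcons : ∀ i v, g (i :: v) = i :: s i v)
    (hs : ∀ i, IsOfFinOrder (s i)) : IsOfFinOrder g := by
  have hpow : ∀ m i v, (g ^ m) (i :: v) = i :: (s i ^ m) v := by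
    intro m
    induction m with
    | zero => simp
    | succ m ih => intro i v; rw [pow_succ', Perm.mul_apply, ih, hcons, pow_succ', Perm.mul_apply]
  set n := ∏ i, orderOf (s i)
  refine isOfFinOrder_iff_pow_eq_one.mpr ⟨n, Finset.prod_pos fun i _ => (hs i).orderOf_pos, ?_⟩
  ext1 v
  rcases v with _ | ⟨i, v⟩
  · exact g.pow_apply_eq_self_of_apply_eq_self hnil n
  · rw [hpow, orderOf_dvd_iff_pow_eq_one.mp (Finset.dvd_prod_of_mem (fun i => orderOf (s i))
      (Finset.mem_univ i))]
    rfl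

theorem grigBCD_comp_cyclic : ∀ v : List Bool,
    grigB (grigC v) = grigD v ∧ grigC (grigD v) = grigB v ∧ grigD (grigB v) = grigC v
  | [] => ⟨rfl, rfl, rfl⟩
  | false :: w => by simp [grigB, grigC, grigD, grigA_involutive w]
  | true :: w => by
    obtain ⟨hbc, hcd, hdb⟩ := grigBCD_comp_cyclic w
    simp [grigB, grigC, grigD, hbc, hcd, hdb]

namespace Grigorchuk

open Equiv

inductive Letter
  | a | b | c | d

namespace Letter

def perm : Letter → Perm (List Bool)
  | a => grigPermA
  | b => grigPermB
  | c => grigPermC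
  | d => grigPermD

theorem perm_mem (x : Letter) : x.perm ∈ grigorchukGroup :=
  Subgroup.subset_closure (by cases x <;> simp [perm])

theorem perm_mul_self (x : Letter) : x.perm * x.perm = 1 := by
  ext1 v
  cases x
  exacts [grigA_involutive v, grigB_involutive v, grigC_involutive v, grigD_involutive v]

theorem perm_inv (x : Letter) : x.perm⁻¹ = x.perm :=
  inv_eq_of_mul_eq_one_right x.perm_mul_self

theorem isOfFinOrder_perm (x : Letter) : IsOfFinOrder x.perm :=
  isOfFinOrder_iff_pow_eq_one.mpr ⟨2, two_pos, by rw [sq, perm_mul_self]⟩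

theorem perm_klein :
    b.perm * c.perm = d.perm ∧ c.perm * d.perm = b.perm ∧ d.perm * b.perm = c.perm ∧
      c.perm * b.perm = d.perm ∧ d.perm * c.perm = b.perm ∧ b.perm * d.perm = c.perm := by
  have hbc : b.perm * c.perm = d.perm := Perm.ext fun v => (grigBCD_comp_cyclic v).1
  have hcd : c.perm * d.perm = b.perm := Perm.ext fun v => (grigBCD_comp_cyclic v).2.1
  have hdb : d.perm * b.perm = c.perm := Perm.ext fun v => (grigBCD_comp_cyclic v).2.2
  refine ⟨hbc, hcd, hdb, ?_, ?_, ?_⟩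
  · rw [← hcd, ← mul_assoc, perm_mul_self, one_mul]
  · rw [← hdb, ← mul_assoc, perm_mul_self, one_mul]
  · rw [← hbc, ← mul_assoc, perm_mul_self, one_mul]

def isA : Letter → Bool
  | a => true
  | _ => false

/- `sectionWeight x` is the total weight of the two sections of `x`. The weights make a pair of
letters of different kinds outweigh its sections (`sectionWeight_add_lt`), and the product of two
of `b, c, d` lighter than the pair (`weight_reduceCons_lt`). -/
def weight : Letter → ℕ
  | a => 3
  | b => 4
  | c => 3
  | d => 2

def sectionWeight : Letter → ℕ
  | a => 0
  | b => a.weight + c.weight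
  | c => a.weight + d.weight
  | d => b.weight

theorem sectionWeight_add_lt {x y : Letter} (h : x.isA ≠ y.isA) :
    x.sectionWeight + y.sectionWeight < x.weight + y.weight := by
  cases x <;> cases y <;> simp_all [isA, weight, sectionWeight]

def lift : Letter → List Letter
  | a => [b]
  | b => [a, d, a]
  | c => [a, b, a]
  | d => [a, c, a]

end Letter

open Letter

def wordPerm (w : List Letter) : Perm (List Bool) := (w.map Letter.perm).prod

@[simp] theorem wordPerm_nil : wordPerm [] = 1 := rfl

@[simp] theorem wordPerm_cons (x : Letter) (w : List Letter) :
    wordPerm (x :: w) = x.perm * wordPerm w := by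
  simp [wordPerm]

@[simp] theorem wordPerm_append (u v : List Letter) :
    wordPerm (u ++ v) = wordPerm u * wordPerm v := by
  simp [wordPerm]

theorem wordPerm_mem (w : List Letter) : wordPerm w ∈ grigorchukGroup :=
  Subgroup.list_prod_mem _ fun _ hx =>
    let ⟨x, _, hx⟩ := List.mem_map.mp hx
    hx ▸ x.perm_mem

theorem wordPerm_reverse (w : List Letter) : wordPerm w.reverse = (wordPerm w)⁻¹ := by
  induction w with
  | nil => simp
  | cons x w ih => simp [ih, perm_inv]

theorem exists_wordPerm_eq {g : Perm (List Bool)} (hg : g ∈ grigorchukGroup) :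
    ∃ w, wordPerm w = g := by
  induction hg using Subgroup.closure_induction with
  | mem g hg =>
    rcases hg with rfl | rfl | rfl | rfl
    exacts [⟨[a], mul_one _⟩, ⟨[b], mul_one _⟩, ⟨[c], mul_one _⟩, ⟨[d], mul_one _⟩]
  | one => exact ⟨[], rfl⟩
  | mul g h _ _ hg hh =>
    obtain ⟨u, rfl⟩ := hg
    obtain ⟨v, rfl⟩ := hh
    exact ⟨u ++ v, wordPerm_append u v⟩
  | inv g _ hg =>
    obtain ⟨u, rfl⟩ := hg
    exact ⟨u.reverse, wordPerm_reverse u⟩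

def weight (w : List Letter) : ℕ := (w.map Letter.weight).sum

def sectionWeight (w : List Letter) : ℕ := (w.map Letter.sectionWeight).sum

@[simp] theorem weight_nil : weight [] = 0 := rfl

@[simp] theorem weight_cons (x : Letter) (w : List Letter) :
    weight (x :: w) = x.weight + weight w := by
  simp [weight]

@[simp] theorem weight_append (u v : List Letter) : weight (u ++ v) = weight u + weight v := by
  simp [weight]

@[simp] theorem sectionWeight_nil : sectionWeight [] = 0 := rfl

@[simp] theorem sectionWeight_cons (x : Letter) (w : List Letter) :
    sectionWeight (x :: w) = x.sectionWeight + sectionWeight w := by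
  simp [sectionWeight]

def Alternating (w : List Letter) : Prop := w.IsChain fun x y => x.isA ≠ y.isA

def reduceCons : Letter → List Letter → List Letter
  | a, a :: v | b, b :: v | c, c :: v | d, d :: v => v
  | b, c :: v | c, b :: v => d :: v
  | b, d :: v | d, b :: v => c :: v
  | c, d :: v | d, c :: v => b :: v
  | x, v => x :: v

def reduce (w : List Letter) : List Letter := w.foldr reduceCons []

theorem wordPerm_reduceCons (x : Letter) (w : List Letter) :
    wordPerm (reduceCons x w) = x.perm * wordPerm w := by
  obtain ⟨hbc, hcd, hdb, hcb, hdc, hbd⟩ := perm_klein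
  rcases w with _ | ⟨y, v⟩
  · cases x <;> rfl
  · cases x <;> cases y <;> simp [reduceCons, ← mul_assoc, perm_mul_self, *]

theorem weight_reduceCons_le (x : Letter) (w : List Letter) :
    weight (reduceCons x w) ≤ x.weight + weight w := by
  rcases w with _ | ⟨y, v⟩
  · cases x <;> simp [reduceCons]
  · cases x <;> cases y <;> simp [reduceCons, Letter.weight] <;> omega

theorem weight_reduceCons_lt {x y : Letter} (h : x.isA = y.isA) (v : List Letter) :
    weight (reduceCons x (y :: v)) < x.weight + weight (y :: v) := by
  cases x <;> cases y <;> simp_all [reduceCons, Letter.weight, isA] <;> omega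

theorem alternating_reduceCons (x : Letter) {w : List Letter} (hw : Alternating w) :
    Alternating (reduceCons x w) := by
  rcases w with _ | ⟨y, v⟩
  · cases x <;> simp [reduceCons, Alternating]
  · cases x <;> cases y <;> simp_all [reduceCons, Alternating, List.isChain_cons, isA]

theorem wordPerm_reduce (w : List Letter) : wordPerm (reduce w) = wordPerm w := by
  induction w with
  | nil => rfl
  | cons x w ih => rw [reduce, List.foldr_cons, wordPerm_reduceCons, ← reduce, ih, wordPerm_cons]

theorem weight_reduce_le (w : List Letter) : weight (reduce w) ≤ weight w := by
  induction w with
  | nil => rfl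
  | cons x w ih =>
    rw [reduce, List.foldr_cons, weight_cons]
    exact (weight_reduceCons_le x _).trans (by rw [← reduce]; omega)

theorem alternating_reduce (w : List Letter) : Alternating (reduce w) := by
  induction w with
  | nil => exact List.isChain_nil
  | cons x w ih => exact alternating_reduceCons x ih

def parity : List Letter → Bool
  | [] => false
  | x :: w => x.isA ^^ parity w

/- The letters to the right of a letter act first, so their parity decides at which vertex the
section of that letter is taken. -/
def wordSection : List Letter → Bool → List Letter
  | [], _ => []
  | a :: w, i => wordSection w i
  | b :: w, i => (if parity w ^^ i then c else a) :: wordSection w i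
  | c :: w, i => (if parity w ^^ i then d else a) :: wordSection w i
  | d :: w, i => if parity w ^^ i then b :: wordSection w i else wordSection w i

theorem wordPerm_apply_nil (w : List Letter) : wordPerm w [] = [] := by
  induction w with
  | nil => rfl
  | cons x w ih => cases x <;> simp [ih, Letter.perm] <;> rfl

theorem wordPerm_apply_cons (w : List Letter) (i : Bool) (v : List Bool) :
    wordPerm w (i :: v) = (parity w ^^ i) :: wordPerm (wordSection w i) v := by
  induction w with
  | nil => simp [parity, wordSection]
  | cons x w ih =>
    rw [wordPerm_cons, Perm.mul_apply, ih]
    cases x <;> cases hp : parity w <;> cases i <;>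
      simp [parity, wordSection, Letter.perm, isA, hp, grigPermA, grigA, grigPermB, grigB,
        grigPermC, grigC, grigPermD, grigD]

@[simp] theorem parity_append (u v : List Letter) : parity (u ++ v) = (parity u ^^ parity v) := by
  induction u with
  | nil => simp [parity]
  | cons x u ih => simp [parity, ih]

theorem wordSection_append (u v : List Letter) (i : Bool) :
    wordSection (u ++ v) i = wordSection u (parity v ^^ i) ++ wordSection v i := by
  induction u with
  | nil => simp [wordSection]
  | cons x u ih =>
    cases x <;> simp only [wordSection, ih, List.cons_append, List.cons.injEq] <;>
      split_ifs <;> simp_all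

theorem weight_wordSection_add (w : List Letter) :
    weight (wordSection w false) + weight (wordSection w true) = sectionWeight w := by
  induction w with
  | nil => rfl
  | cons x w ih =>
    cases x <;> cases hp : parity w <;> simp [wordSection, Letter.sectionWeight, hp, ← ih] <;>
      omega

theorem sectionWeight_lt_weight : ∀ {w : List Letter} {x y : Letter}, Alternating w →
    w.head? = some x → w.getLast? = some y → x.isA ≠ y.isA → sectionWeight w < weight w
  | [], _, _, _, hx, _, _ => by simp at hx
  | [_], _, _, _, hx, hy, hxy => by simp_all
  | [_, _], _, _, hw, hx, hy, _ => by
    simp only [List.head?_cons, List.getLast?_cons_cons, List.getLast?_singleton,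
      Option.some.injEq] at hx hy
    subst hx hy
    simpa using sectionWeight_add_lt (by simpa [Alternating] using hw)
  | x' :: y' :: z :: v, x, y, hw, hx, hy, hxy => by
    rw [Alternating, List.isChain_cons_cons, List.isChain_cons_cons] at hw
    obtain ⟨hxy', hyz, hw⟩ := hw
    simp only [List.head?_cons, Option.some.injEq] at hx
    subst hx
    have hz : z.isA = x'.isA := by
      revert hxy' hyz; cases z.isA <;> cases x'.isA <;> cases y'.isA <;> simp
    have := sectionWeight_lt_weight (w := z :: v) hw rfl
      (by rwa [List.getLast?_cons_cons, List.getLast?_cons_cons] at hy) (hz ▸ hxy)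
    have := sectionWeight_add_lt hxy'
    simp only [sectionWeight_cons, weight_cons] at *
    omega

theorem isOfFinOrder_wordPerm_of_parity_eq_false {w : List Letter} (hw : parity w = false)
    (hs : ∀ i, IsOfFinOrder (wordPerm (wordSection w i))) : IsOfFinOrder (wordPerm w) :=
  Perm.isOfFinOrder_of_apply_cons (wordPerm_apply_nil w)
    (fun i v => by rw [wordPerm_apply_cons, hw, Bool.false_xor]) hs

theorem isOfFinOrder_wordPerm_of_sectionWeight_lt {w : List Letter} {N : ℕ}
    (ih : ∀ u, weight u < N → IsOfFinOrder (wordPerm u)) (hw : sectionWeight w < N) :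
    IsOfFinOrder (wordPerm w) := by
  have hsum := weight_wordSection_add w
  cases hp : parity w
  · refine isOfFinOrder_wordPerm_of_parity_eq_false hp fun i => ih _ ?_
    cases i <;> omega
  · have hsq : IsOfFinOrder (wordPerm (w ++ w)) := by
      refine isOfFinOrder_wordPerm_of_parity_eq_false (by simp [hp]) fun i => ih _ ?_
      cases i <;> simp [wordSection_append, hp] <;> omega
    rw [wordPerm_append, ← sq] at hsq
    exact hsq.of_pow two_ne_zero

theorem isConj_wordPerm_reduceCons (x y : Letter) (v : List Letter) :
    IsConj (wordPerm (x :: (v ++ [y]))) (wordPerm (reduceCons y (x :: v))) := by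
  refine isConj_iff.mpr ⟨y.perm, ?_⟩
  simp only [wordPerm_reduceCons, wordPerm_cons, wordPerm_append, wordPerm_nil, perm_inv,
    mul_one, mul_assoc, perm_mul_self]

theorem isOfFinOrder_wordPerm_of_alternating {w : List Letter} (hw : Alternating w)
    (ih : ∀ u, weight u < weight w → IsOfFinOrder (wordPerm u)) :
    IsOfFinOrder (wordPerm w) := by
  rcases w with _ | ⟨x, t⟩
  · exact IsOfFinOrder.one
  rcases t.eq_nil_or_concat with rfl | ⟨v, y, rfl⟩
  · simpa using x.isOfFinOrder_perm
  rw [List.concat_eq_append] at hw ih ⊢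
  by_cases hxy : y.isA = x.isA
  · refine (isConj_wordPerm_reduceCons x y v).symm.isOfFinOrder (ih _ ?_)
    have := weight_reduceCons_lt hxy v
    simp only [weight_cons, weight_append] at this ⊢
    omega
  · exact isOfFinOrder_wordPerm_of_sectionWeight_lt ih (sectionWeight_lt_weight hw rfl
      (by rw [← List.cons_append, List.getLast?_concat]) (Ne.symm hxy))

theorem isOfFinOrder_wordPerm (w : List Letter) : IsOfFinOrder (wordPerm w) := by
  induction hn : weight w using Nat.strong_induction_on generalizing w with
  | _ n ih =>
    rw [← wordPerm_reduce]
    refine isOfFinOrder_wordPerm_of_alternating (alternating_reduce w) fun u hu => ?_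
    exact ih _ (hn ▸ hu.trans_le (weight_reduce_le w)) u rfl

theorem parity_flatMap_lift (w : List Letter) : parity (w.flatMap Letter.lift) = false := by
  induction w with
  | nil => rfl
  | cons x w ih => cases x <;> simp [ih, Letter.lift, parity, isA]

theorem wordSection_flatMap_lift (w : List Letter) :
    wordSection (w.flatMap Letter.lift) false = w := by
  induction w with
  | nil => rfl
  | cons x w ih =>
    cases x <;> simp [parity_flatMap_lift, ih, Letter.lift, wordSection, parity, isA]

theorem wordPerm_flatMap_lift_apply (w : List Letter) (v : List Bool) :
    wordPerm (w.flatMap Letter.lift) (false :: v) = false :: wordPerm w v := by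
  rw [wordPerm_apply_cons, parity_flatMap_lift, wordSection_flatMap_lift, Bool.false_xor]

theorem exists_wordPerm_apply_replicate :
    ∀ v : List Bool, ∃ w, wordPerm w (List.replicate v.length false) = v
  | [] => ⟨[], rfl⟩
  | i :: v => by
    obtain ⟨w, hw⟩ := exists_wordPerm_apply_replicate v
    refine ⟨(if i then [a] else []) ++ w.flatMap Letter.lift, ?_⟩
    cases i <;>
      simp [List.replicate_succ, wordPerm_flatMap_lift_apply, hw, Letter.perm, grigPermA, grigA]

end Grigorchuk

open Grigorchuk

theorem isMulTorsion_grigorchukGroup : IsMulTorsion grigorchukGroup := fun g => by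
  obtain ⟨w, hw⟩ := exists_wordPerm_eq g.2
  exact Submonoid.isOfFinOrder_coe.mp (hw ▸ isOfFinOrder_wordPerm w)

instance : Group.FG grigorchukGroup := Group.closure_finite_fg _

instance : Infinite grigorchukGroup := by
  refine not_finite_iff_infinite.mp fun _ => ?_
  set n := Nat.card grigorchukGroup
  let f : grigorchukGroup → (Fin n → Bool) := fun g k =>
    (g.1 (List.replicate n false)).getD k false
  have hf : Function.Surjective f := fun v => by
    obtain ⟨w, hw⟩ := exists_wordPerm_apply_replicate (List.ofFn v)
    refine ⟨⟨wordPerm w, wordPerm_mem w⟩, funext fun k => ?_⟩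
    simp only [List.length_ofFn] at hw
    simp [f, hw]
  have := Nat.card_le_card_of_surjective f hf
  simp only [Nat.card_eq_fintype_card, Fintype.card_fun, Fintype.card_bool, Fintype.card_fin]
    at this
  exact Nat.lt_two_pow_self.not_ge this

/-- Grigorchuk's group is not virtually solvable: it has no solvable subgroup of
finite index. -/
theorem grigorchukGroup_not_virtually_solvable :
    ¬ ∃ K : Subgroup grigorchukGroup, K.FiniteIndex ∧ IsSolvable K :=
  not_exists_finiteIndex_isSolvable isMulTorsion_grigorchukGroup
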